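/- The rewriting system on words over {H, E} ∪ {W_i : i ∈ ℕ} with rules H·W_i → W_{i+1}·H, H·E → E·H, W_i·W_j → W_j·W_i (i < j), and W_i·W_i → W_i is terminating. -/

import Mathlib

/-!
Interpret each letter as a strictly increasing map `ℕ → ℕ`:
`H x = 2x`, `E x = x + 1`, `W i x = 2x + 2^i + 1`, and weigh a word by composing the maps of
its letters and evaluating at `0`. Each rule strictly decreases the interpretation of its
left-hand side pointwise (for `H·W_i → W_{i+1}·H` by exactly `1`, for `W_i·W_j → W_j·W_i` by
`2^j - 2^i`), and strict monotonicity carries this through any context, so every step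
decreases the weight in `ℕ`.
-/

/-- Letters of the alphabet: `H`, `E` and `W i` for `i : ℕ`. -/
inductive Letter
  | H : Letter
  | E : Letter
  | W : ℕ → Letter

open Letter

/-- One rewriting step: a factor matching the left-hand side of a rule is
replaced by the right-hand side, anywhere in the word. -/
inductive Step : List Letter → List Letter → Prop
  | hw (u v : List Letter) (i : ℕ) :
      Step (u ++ [H, W i] ++ v) (u ++ [W (i + 1), H] ++ v)
  | he (u v : List Letter) :
      Step (u ++ [H, E] ++ v) (u ++ [E, H] ++ v)
  | ww (u v : List Letter) (i j : ℕ) (hij : i < j) :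
      Step (u ++ [W i, W j] ++ v) (u ++ [W j, W i] ++ v)
  | wii (u v : List Letter) (i : ℕ) :
      Step (u ++ [W i, W i] ++ v) (u ++ [W i] ++ v)

namespace Letter

def interp : Letter → ℕ → ℕ
  | H, x => 2 * x
  | E, x => x + 1
  | W i, x => 2 * x + 2 ^ i + 1

theorem strictMono_interp (a : Letter) : StrictMono a.interp := by
  intro x y h
  cases a <;> simp only [interp] <;> omega

end Letter

theorem List.strictMono_foldr_interp (u : List Letter) :
    StrictMono fun x => u.foldr Letter.interp x := by
  induction u with
  | nil => exact strictMono_id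
  | cons a u ih => exact (strictMono_interp a).comp ih

def weight (w : List Letter) : ℕ := w.foldr Letter.interp 0

theorem weight_append_lt_of_foldr_lt {l r : List Letter}
    (h : ∀ x, r.foldr Letter.interp x < l.foldr Letter.interp x) (u v : List Letter) :
    weight (u ++ r ++ v) < weight (u ++ l ++ v) := by
  simp only [weight, List.foldr_append]
  exact u.strictMono_foldr_interp (h _)

theorem Step.weight_lt {w w' : List Letter} (h : Step w w') : weight w' < weight w := by
  cases h with
  | hw u v i =>
    refine weight_append_lt_of_foldr_lt (fun x => ?_) u v
    simp only [List.foldr, interp, pow_succ]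
    omega
  | he u v =>
    refine weight_append_lt_of_foldr_lt (fun x => ?_) u v
    simp only [List.foldr, interp]
    omega
  | ww u v i j hij =>
    refine weight_append_lt_of_foldr_lt (fun x => ?_) u v
    have : 2 ^ i < 2 ^ j := Nat.pow_lt_pow_right (by norm_num) hij
    simp only [List.foldr, interp]
    omega
  | wii u v i =>
    refine weight_append_lt_of_foldr_lt (fun x => ?_) u v
    have := Nat.one_le_two_pow (n := i)
    simp only [List.foldr, interp]
    omega

/-- The rewriting system (with the idempotency rule `W i · W i → W i` added) is
terminating: there is no infinite sequence of rewriting steps. -/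
theorem step_terminating :
    ∀ f : ℕ → List Letter, ¬ (∀ n, Step (f n) (f (n + 1))) := fun f hf =>
  not_strictAnti_of_wellFoundedLT (weight ∘ f) (strictAnti_nat_of_succ_lt fun n => (hf n).weight_lt)
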